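/- arXiv:2109.03183 — 5 statements merged into one kernel-verified Lean document; each statement's English description precedes it below -/
import Mathlib

section
/- Suppose that σ₁ and σ₂ are two proper circular partitions of X that are compatible. Then there exists a circular partition σ' in C(X) with σ₁ ≼ σ' and σ₂ ≼ σ'. -/
noncomputable section

namespace PhyloCactus

/-- A list of sets is a (linear ordering of a) partition of `X`: at least two parts,
no repeated parts, all parts nonempty, and every element of `X` lies in exactly one part. -/
def IsPartList (X : Type) (l : List (Set X)) : Prop :=
  2 ≤ l.length ∧ l.Nodup ∧ (∀ A ∈ l, A.Nonempty) ∧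
    ∀ x : X, ∃! A : Set X, A ∈ l ∧ x ∈ A

/-- One step of circular re-ordering of a list: a cyclic rotation or a reversal. -/
def CircStep (X : Type) (l l' : List (Set X)) : Prop :=
  l' = l.rotate 1 ∨ l' = l.reverse

/-- Linear orderings of partitions of `X`. -/
abbrev PartList (X : Type) := {l : List (Set X) // IsPartList X l}

/-- Two linear orderings are circularly equivalent if they are related by the
equivalence relation generated by rotations and reversals. -/
def circSetoid (X : Type) : Setoid (PartList X) where
  r a b := Relation.EqvGen (CircStep X) a.1 b.1
  iseqv := ⟨fun _ => Relation.EqvGen.refl _, fun h => Relation.EqvGen.symm _ _ h,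
    fun h h' => Relation.EqvGen.trans _ _ _ h h'⟩

/-- A circular partition of `X`: a partition together with a circular ordering of
its parts, i.e. an equivalence class of linear orderings of partitions of `X`
under cyclic rotation and reversal. -/
def CircPart (X : Type) := Quotient (circSetoid X)

/-- The circular partition determined by a linear ordering of a partition. -/
def CircPart.mk {X : Type} (l : PartList X) : CircPart X :=
  Quotient.mk (circSetoid X) l

/-- The set of parts of a circular partition. -/
def CircPart.parts {X : Type} (σ : CircPart X) : Set (Set X) :=
  {A | ∃ l : PartList X, σ = CircPart.mk l ∧ A ∈ l.1}

/-- The number of parts of a circular partition. -/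
def CircPart.numParts {X : Type} (σ : CircPart X) : ℕ := σ.parts.ncard

/-- A circular partition is a split if it has exactly two parts. -/
def CircPart.IsSplit {X : Type} (σ : CircPart X) : Prop :=
  ∃ l : PartList X, σ = CircPart.mk l ∧ l.1.length = 2

/-- A partition of `X`, as a set of parts. -/
def IsPartition (X : Type) (π : Set (Set X)) : Prop :=
  2 ≤ π.ncard ∧ (∀ A ∈ π, A.Nonempty) ∧ ∀ x : X, ∃! A : Set X, A ∈ π ∧ x ∈ A

/-- Two partitions of `X` are compatible if some part of the first and some part
of the second have union `X`. -/
def PartCompatible {X : Type} (π π' : Set (Set X)) : Prop :=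
  ∃ A ∈ π, ∃ B ∈ π', A ∪ B = (Set.univ : Set X)

/-- A collection of partitions is compatible if any two distinct members are compatible. -/
def PartFamilyCompatible {X : Type} (Ps : Set (Set (Set X))) : Prop :=
  ∀ π ∈ Ps, ∀ π' ∈ Ps, π ≠ π' → PartCompatible π π'

/-- Two circular partitions are compatible if their underlying partitions are. -/
def CircPart.Compatible {X : Type} (σ σ' : CircPart X) : Prop :=
  PartCompatible σ.parts σ'.parts

/-- A set of circular partitions is compatible if any two distinct members are compatible. -/
def CompatibleFamily {X : Type} (C : Set (CircPart X)) : Prop :=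
  ∀ σ ∈ C, ∀ τ ∈ C, σ ≠ τ → σ.Compatible τ

/-- `MergeStep σ σ'` holds if `σ'` is obtained from `σ` by merging two parts that are
adjacent in the circular ordering of `σ` into a single part. -/
def MergeStep {X : Type} (σ σ' : CircPart X) : Prop :=
  ∃ (A B : Set X) (t : List (Set X)) (h : IsPartList X (A :: B :: t))
    (h' : IsPartList X ((A ∪ B) :: t)),
    σ = CircPart.mk ⟨A :: B :: t, h⟩ ∧ σ' = CircPart.mk ⟨(A ∪ B) :: t, h'⟩

/-- `σ ≼ τ`: either `σ = τ`, or `σ` is proper and `σ` is obtained from `τ` by a finite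
sequence of merges. -/
def CircPart.Preceq {X : Type} (σ τ : CircPart X) : Prop :=
  σ = τ ∨ (¬ σ.IsSplit ∧ Relation.ReflTransGen MergeStep τ σ)

/-- A domination map from `C` to `C'`: an injective map with `σ ≼ L σ` for all `σ ∈ C`. -/
def IsDominationMap {X : Type} (C C' : Set (CircPart X))
    (L : CircPart X → CircPart X) : Prop :=
  Set.MapsTo L C C' ∧ Set.InjOn L C ∧ ∀ σ ∈ C, CircPart.Preceq σ (L σ)

/-- `C` is dominated by `C'` if there is a domination map from `C` to `C'`. -/
def Dominates {X : Type} (C C' : Set (CircPart X)) : Prop :=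
  ∃ L, IsDominationMap C C' L

end PhyloCactus

namespace PhyloCactus

/-- A graph is a cactus if any two distinct cycles share at most one vertex. -/
def IsCactus {V : Type} (G : SimpleGraph V) : Prop :=
  ∀ ⦃u v : V⦄ (c : G.Walk u u) (c' : G.Walk v v), c.IsCycle → c'.IsCycle →
    {e | e ∈ c.edges} ≠ {e | e ∈ c'.edges} →
    Set.Subsingleton {w | w ∈ c.support ∧ w ∈ c'.support}

/-- An `X`-cactus: a finite connected cactus together with a labelling map
`φ : X → V` whose image contains every vertex of degree at most two. -/
structure XCactus (X : Type) where
  V : Type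
  fintypeV : Fintype V
  G : SimpleGraph V
  connected : G.Connected
  cactus : IsCactus G
  φ : X → V
  labels : ∀ v : V, (G.neighborSet v).ncard ≤ 2 → v ∈ Set.range φ

namespace XCactus

variable {X : Type}

/-- The trivial `X`-cactus consists of a single vertex. -/
def IsTrivial (N : XCactus X) : Prop := ∀ u v : N.V, u = v

/-- The labels reachable from `w` after deleting the edge set `s`. -/
def compPart (N : XCactus X) (s : Set (Sym2 N.V)) (w : N.V) : Set X :=
  {x : X | (N.G.deleteEdges s).Reachable w (N.φ x)}

/-- The list of label-classes of the connected components met along `vs`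
after deleting the edge set `s`. -/
def blockList (N : XCactus X) (s : Set (Sym2 N.V)) (vs : List N.V) : List (Set X) :=
  vs.map (N.compPart s)

/-- The set `C(N)` of circular partitions of `X` induced by the blocks of `N`:
each cut edge induces a split and each cycle induces a circular partition, whose
circular order is given by the cyclic order of the vertices on the cycle. -/
def circSet (N : XCactus X) : Set (CircPart X) :=
  {σ | ∃ l : PartList X, σ = CircPart.mk l ∧
    ((∃ u v : N.V, N.G.IsBridge s(u, v) ∧ l.1 = N.blockList {s(u, v)} [u, v]) ∨
      (∃ (v : N.V) (c : N.G.Walk v v), c.IsCycle ∧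
        l.1 = N.blockList {e | e ∈ c.edges} c.support.tail))}

/-- The set `C_b(N)` of splits of `N`. -/
def splitSet (N : XCactus X) : Set (CircPart X) := {σ ∈ N.circSet | σ.IsSplit}

/-- The set `C_p(N)` of proper circular partitions of `N`. -/
def properSet (N : XCactus X) : Set (CircPart X) := {σ ∈ N.circSet | ¬ σ.IsSplit}

/-- Isomorphism of `X`-cactuses: a graph isomorphism commuting with the labelling maps. -/
def Isom (N N' : XCactus X) : Prop :=
  ∃ f : N.V ≃ N'.V, (∀ u v : N.V, N.G.Adj u v ↔ N'.G.Adj (f u) (f v)) ∧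
    ∀ x : X, f (N.φ x) = N'.φ x

theorem isom_refl (N : XCactus X) : N.Isom N :=
  ⟨Equiv.refl _, fun _ _ => Iff.rfl, fun _ => rfl⟩

theorem isom_symm {N N' : XCactus X} (h : N.Isom N') : N'.Isom N := by
  obtain ⟨f, hadj, hphi⟩ := h
  refine ⟨f.symm, fun u v => ?_, fun x => ?_⟩
  · simpa using (hadj (f.symm u) (f.symm v)).symm
  · rw [← hphi x]; simp

theorem isom_trans {a b c : XCactus X} (h1 : a.Isom b) (h2 : b.Isom c) : a.Isom c := by
  obtain ⟨f, hadj, hphi⟩ := h1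
  obtain ⟨g, hadj', hphi'⟩ := h2
  exact ⟨f.trans g, fun u v => (hadj u v).trans (hadj' (f u) (f v)),
    fun x => by simp [Equiv.trans_apply, hphi, hphi']⟩

/-- The degree of a vertex. -/
def deg (N : XCactus X) (v : N.V) : ℕ := (N.G.neighborSet v).ncard

/-- A leaf is a vertex of degree one. -/
def IsLeaf (N : XCactus X) (v : N.V) : Prop := N.deg v = 1

/-- A phylogenetic `X`-cactus: the labelling map is a bijection onto the leaves. -/
def Phylogenetic (N : XCactus X) : Prop :=
  Function.Injective N.φ ∧ Set.range N.φ = {v : N.V | N.IsLeaf v}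

/-- A binary `X`-cactus: every internal vertex has degree three. -/
def Binary (N : XCactus X) : Prop := ∀ v : N.V, ¬ N.IsLeaf v → N.deg v = 3

/-- A vertex is contained in some cycle. -/
def InCycle (N : XCactus X) (v : N.V) : Prop :=
  ∃ (w : N.V) (c : N.G.Walk w w), c.IsCycle ∧ v ∈ c.support

/-- A vertex is contained in some tiny cycle (a cycle with exactly three vertices). -/
def InTinyCycle (N : XCactus X) (v : N.V) : Prop :=
  ∃ (w : N.V) (c : N.G.Walk w w), c.IsCycle ∧ c.length = 3 ∧ v ∈ c.support

/-- An `X`-tree is an `X`-cactus whose underlying graph is a tree (i.e. acyclic). -/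
def IsXTree (N : XCactus X) : Prop := N.G.IsAcyclic

end XCactus

/-- The rank of an `X`-cactus: `ρ(N) = Σ_{σ ∈ C(N)} max 1 (|σ| - 2)`
(`ρ(N) = 0` for the trivial `X`-cactus, whose `C(N)` is empty). -/
def rho {X : Type} (N : XCactus X) : ℤ :=
  ∑ᶠ σ ∈ N.circSet, max 1 ((σ.numParts : ℤ) - 2)

end PhyloCactus

namespace PhyloCactus

variable {X : Type}

/-- `X`-cactuses up to isomorphism. -/
def xcactusSetoid (X : Type) : Setoid (XCactus X) where
  r := XCactus.Isom
  iseqv := ⟨XCactus.isom_refl, XCactus.isom_symm, XCactus.isom_trans⟩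

/-- `G(X)`: the set of `X`-cactuses up to isomorphism. -/
def GX (X : Type) := Quotient (xcactusSetoid X)

/-- The isomorphism class of an `X`-cactus. -/
def GX.mk (N : XCactus X) : GX X := Quotient.mk (xcactusSetoid X) N

/-- `f : N.V → N'.V` realises `N'` as the result of collapsing the set `S` of
vertices of `N` to a single vertex (keeping all adjacencies between distinct
images, and relabelling by composition). -/
def ContractionMapSpec (N N' : XCactus X) (S : Set N.V) (f : N.V → N'.V) : Prop :=
  Function.Surjective f ∧
  (∀ a b : N.V, f a = f b ↔ (a = b ∨ (a ∈ S ∧ b ∈ S))) ∧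
  (∀ a b : N.V, N'.G.Adj (f a) (f b) ↔
    (f a ≠ f b ∧ ∃ a' b' : N.V, f a' = f a ∧ f b' = f b ∧ N.G.Adj a' b')) ∧
  (∀ x : X, N'.φ x = f (N.φ x))

/-- `N'` is obtained from `N` by contracting an edge `{u, v}` that is not
contained in a tiny cycle (equivalently, `u` and `v` have no common neighbour):
`u` and `v` are identified and the new vertex is labelled by
`φ⁻¹(u) ∪ φ⁻¹(v)`. -/
def IsEdgeContraction (N N' : XCactus X) : Prop :=
  ∃ (u v : N.V) (f : N.V → N'.V), N.G.Adj u v ∧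
    (¬ ∃ w : N.V, N.G.Adj u w ∧ N.G.Adj v w) ∧
    ContractionMapSpec N N' {u, v} f

/-- `N'` is obtained from `N` by a triple contraction of a tiny cycle
`v₁, v₂, v₃`: the cycle is collapsed to a single vertex, labelled by the union
of the labels of `v₁, v₂, v₃`, adjacent to exactly the former outside
neighbours of the cycle. -/
def IsTripleContraction (N N' : XCactus X) : Prop :=
  ∃ (v₁ v₂ v₃ : N.V) (f : N.V → N'.V),
    N.G.Adj v₁ v₂ ∧ N.G.Adj v₂ v₃ ∧ N.G.Adj v₁ v₃ ∧
    ContractionMapSpec N N' {v₁, v₂, v₃} f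

/-- A contraction is an edge contraction or a triple contraction. -/
def IsContraction (N N' : XCactus X) : Prop :=
  IsEdgeContraction N N' ∨ IsTripleContraction N N'

/-- One contraction step on isomorphism classes of `X`-cactuses. -/
def GStep (a b : GX X) : Prop :=
  ∃ N N' : XCactus X, a = GX.mk N ∧ b = GX.mk N' ∧ IsContraction N N'

/-- The order on `G(X)`: `a ≤ b` iff there is a (possibly empty) sequence of
contractions transforming `b` into `a`. -/
def GLe (a b : GX X) : Prop := Relation.ReflTransGen GStep b a

/-- The associated strict order on `G(X)`. -/
def GLt (a b : GX X) : Prop := GLe a b ∧ a ≠ b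

/-- One edge-contraction step between (classes of) `X`-trees. -/
def TStep (a b : GX X) : Prop :=
  ∃ N N' : XCactus X, XCactus.IsXTree N ∧ XCactus.IsXTree N' ∧
    a = GX.mk N ∧ b = GX.mk N' ∧ IsEdgeContraction N N'

/-- The order on `T(X)`: `a ≤ b` iff `a` is obtained from `b` by a (possibly
empty) sequence of edge contractions of `X`-trees. -/
def TLe (a b : GX X) : Prop := Relation.ReflTransGen TStep b a

end PhyloCactus

namespace PhyloCactus

/-- A semi-labelled `X`-tree: a finite tree together with a map `ψ : X → V`
whose image contains every leaf. -/
structure SemiTree (X : Type) where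
  V : Type
  fintypeV : Fintype V
  G : SimpleGraph V
  isTree : G.IsTree
  ψ : X → V
  leaves : ∀ v : V, (G.neighborSet v).ncard = 1 → v ∈ Set.range ψ

namespace SemiTree

variable {X : Type}

/-- The partition `π(v)` of `X` induced by deleting the vertex `v`: its parts
are the label sets of the connected components of `T - v`. -/
def vertexPart (T : SemiTree X) (v : T.V) : Set (Set X) :=
  {P | ∃ w : T.V, w ≠ v ∧
    P = {x : X | (T.G.deleteEdges {e | v ∈ e}).Reachable w (T.ψ x)}}

/-- The split `π(e)` of `X` induced by deleting the edge `e`: its parts are the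
label sets of the connected components of `T - e`. -/
def edgePart (T : SemiTree X) (e : Sym2 T.V) : Set (Set X) :=
  {P | ∃ w : T.V, P = {x : X | (T.G.deleteEdges {e}).Reachable w (T.ψ x)}}

end SemiTree

/-- A semi-tree representation of a collection `Ps` of partitions of `X`:
a semi-labelled `X`-tree together with a map `κ` assigning to each `π ∈ Ps`
either an unlabelled vertex of degree at least three inducing `π`, or an edge
inducing `π`. -/
structure SemiTreeRep (X : Type) (Ps : Set (Set (Set X))) where
  T : SemiTree X
  κ : Set (Set X) → T.V ⊕ Sym2 T.V
  spec : ∀ π ∈ Ps,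
    (∃ v : T.V, κ π = Sum.inl v ∧ v ∉ Set.range T.ψ ∧
      3 ≤ (T.G.neighborSet v).ncard ∧ T.vertexPart v = π) ∨
    (∃ e : Sym2 T.V, κ π = Sum.inr e ∧ e ∈ T.G.edgeSet ∧ T.edgePart e = π)

namespace SemiTreeRep

variable {X : Type} {Ps : Set (Set (Set X))}

/-- `h(e, κ)`: the number of partitions `π ∈ Ps` with `κ(π)` equal to `e` or to
one of its endpoints. -/
def h (R : SemiTreeRep X Ps) (e : Sym2 R.T.V) : ℕ :=
  {π ∈ Ps | (∃ v, v ∈ e ∧ R.κ π = Sum.inl v) ∨ R.κ π = Sum.inr e}.ncard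

/-- A perfect semi-tree representation: `h(e, κ) = 1` for every edge, and `κ(π)`
is an edge exactly when `π` is a split (a representation on the trivial
one-vertex tree is perfect by convention). -/
def Perfect (R : SemiTreeRep X Ps) : Prop :=
  (∀ u v : R.T.V, u = v) ∨
  ((∀ e ∈ R.T.G.edgeSet, R.h e = 1) ∧
    ∀ π ∈ Ps, ((∃ e, R.κ π = Sum.inr e) ↔ π.ncard = 2))

/-- Isomorphism of semi-tree representations. -/
def Isom (R R' : SemiTreeRep X Ps) : Prop :=
  ∃ f : R.T.V ≃ R'.T.V,
    (∀ u v : R.T.V, R.T.G.Adj u v ↔ R'.T.G.Adj (f u) (f v)) ∧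
    (∀ x : X, f (R.T.ψ x) = R'.T.ψ x) ∧
    ∀ π ∈ Ps, R'.κ π = Sum.map f (Sym2.map f) (R.κ π)

end SemiTreeRep

variable {X : Type}

/-- The edge set of the incompatibility graph `I(N₁, N₂)`: pairs of distinct
incompatible circular partitions of `C(N₁) ∪ C(N₂)`. -/
def IncompatEdges (N₁ N₂ : XCactus X) : Set (Sym2 (CircPart X)) :=
  {p | ∃ σ τ : CircPart X, p = s(σ, τ) ∧
    σ ∈ N₁.circSet ∪ N₂.circSet ∧ τ ∈ N₁.circSet ∪ N₂.circSet ∧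
    σ ≠ τ ∧ ¬ σ.Compatible τ}

/-- The set `W₀` of isolated vertices of the incompatibility graph `I(N₁, N₂)`. -/
def IsolatedVerts (N₁ N₂ : XCactus X) : Set (CircPart X) :=
  {σ ∈ N₁.circSet ∪ N₂.circSet |
    ∀ τ ∈ N₁.circSet ∪ N₂.circSet, τ ≠ σ → σ.Compatible τ}

/-- The incompatibility graph `I(N₁, N₂)` is a matching: every vertex has degree
at most one. -/
def IncompatIsMatching (N₁ N₂ : XCactus X) : Prop :=
  ∀ σ ∈ N₁.circSet ∪ N₂.circSet,
    Set.Subsingleton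
      {τ | τ ∈ N₁.circSet ∪ N₂.circSet ∧ τ ≠ σ ∧ ¬ σ.Compatible τ}

/-- A resolution of the incompatibility graph: an injective map on its edges
assigning to each edge an upper bound of its two endpoints in `(C(X), ≼)`. -/
def IsResolution (N₁ N₂ : XCactus X) (lam : Sym2 (CircPart X) → CircPart X) : Prop :=
  Set.InjOn lam (IncompatEdges N₁ N₂) ∧
  ∀ p ∈ IncompatEdges N₁ N₂, ∀ σ, σ ∈ p → CircPart.Preceq σ (lam p)

/-- A minimal resolution: each `lam p` is a least upper bound of the endpoints
of `p` in `(C(X), ≼)`, i.e. no upper bound of the endpoints is strictly below it. -/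
def IsMinimalResolution (N₁ N₂ : XCactus X)
    (lam : Sym2 (CircPart X) → CircPart X) : Prop :=
  IsResolution N₁ N₂ lam ∧
  ∀ p ∈ IncompatEdges N₁ N₂, ∀ μ : CircPart X,
    (∀ σ, σ ∈ p → CircPart.Preceq σ μ) →
    ¬ (CircPart.Preceq μ (lam p) ∧ μ ≠ lam p)

/-- The set of lower bounds in `(C(X), ≼)` of an `m`-tuple of circular partitions. -/
def TupleLowerBounds (m : ℕ) (μ : Fin m → CircPart X) : Set (CircPart X) :=
  {ν | ∀ i : Fin m, CircPart.Preceq ν (μ i)}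

/-- The set `glb(μ₁, …, μ_m)` of greatest lower bounds of an `m`-tuple in
`(C(X), ≼)`: lower bounds above which there is no strictly larger lower bound. -/
def TupleGlb (m : ℕ) (μ : Fin m → CircPart X) : Set (CircPart X) :=
  {ν ∈ TupleLowerBounds m μ |
    ∀ ν' ∈ TupleLowerBounds m μ, CircPart.Preceq ν ν' → ν' = ν}

/-- A feasible subset `Γ` of `C_p(N₁) × ⋯ × C_p(N_m)`: nonempty, every element
has a meet, and distinct elements differ in every coordinate. -/
def Feasible (m : ℕ) (Ns : Fin m → XCactus X)
    (Γ : Set (Fin m → CircPart X)) : Prop :=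
  Γ.Nonempty ∧ (∀ μ ∈ Γ, ∀ i : Fin m, μ i ∈ (Ns i).properSet) ∧
  (∀ μ ∈ Γ, (TupleGlb m μ).Nonempty) ∧
  (∀ μ ∈ Γ, ∀ μ' ∈ Γ, μ ≠ μ' → ∀ i : Fin m, μ i ≠ μ' i)

/-- A meet realization of a feasible set `Γ`: a set of circular partitions
containing exactly one greatest lower bound for each element of `Γ`, minimal
under inclusion with this property. -/
def MeetRealization (m : ℕ) (Γ : Set (Fin m → CircPart X))
    (C : Set (CircPart X)) : Prop :=
  (∀ μ ∈ Γ, ∃! ν, ν ∈ C ∧ ν ∈ TupleGlb m μ) ∧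
  ∀ C' ⊆ C, (∀ μ ∈ Γ, ∃! ν, ν ∈ C' ∧ ν ∈ TupleGlb m μ) → C' = C

end PhyloCactus

/-!
Pick parts `A ∈ σ₁` and `B ∈ σ₂` with `A ∪ B = X` and cut both circular orders open there.
The remaining parts of `σ₁` partition `Aᶜ ⊆ B` and those of `σ₂` partition `Bᶜ ⊆ A`, so the
circle formed by the parts of `σ₁` other than `A`, then `A ∩ B` (when nonempty), then the
parts of `σ₂` other than `B` is a circular partition of `X`. The blocks lying in `A` form a
contiguous arc, and merging it gives back `σ₁`; likewise the arc of blocks in `B` merges to `σ₂`.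
-/

namespace PhyloCactus

open Set Relation

variable {X : Type}

def IsPartListOf (S : Set X) (l : List (Set X)) : Prop :=
  (∀ A ∈ l, A.Nonempty) ∧ l.Pairwise Disjoint ∧ ⋃ A ∈ l, A = S

theorem exists_isPartListOf (S : Set X) : ∃ l, IsPartListOf S l := by
  rcases S.eq_empty_or_nonempty with rfl | hS
  · exact ⟨[], by simp [IsPartListOf]⟩
  · exact ⟨[S], by simp [IsPartListOf, hS]⟩

theorem IsPartListOf.append {S T : Set X} {l₁ l₂ : List (Set X)} (h₁ : IsPartListOf S l₁)
    (h₂ : IsPartListOf T l₂) (hST : Disjoint S T) : IsPartListOf (S ∪ T) (l₁ ++ l₂) := by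
  obtain ⟨hne₁, hd₁, rfl⟩ := h₁
  obtain ⟨hne₂, hd₂, rfl⟩ := h₂
  refine ⟨?_, List.pairwise_append.2 ⟨hd₁, hd₂, fun A hA B hB => ?_⟩, ?_⟩
  · simp only [List.mem_append]
    rintro A (hA | hA)
    exacts [hne₁ A hA, hne₂ A hA]
  · exact hST.mono (fun x hx => mem_iUnion₂.2 ⟨A, hA, hx⟩)
      (fun x hx => mem_iUnion₂.2 ⟨B, hB, hx⟩)
  · simp only [List.mem_append, iUnion_or, iUnion_union_distrib]

theorem IsPartListOf.merge {S A B : Set X} {t : List (Set X)}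
    (h : IsPartListOf S (A :: B :: t)) : IsPartListOf S ((A ∪ B) :: t) := by
  obtain ⟨hne, hd, rfl⟩ := h
  obtain ⟨hA, hd⟩ := List.pairwise_cons.1 hd
  obtain ⟨hB, hd⟩ := List.pairwise_cons.1 hd
  have hABd : ∀ C ∈ t, Disjoint (A ∪ B) C := fun C hC =>
    (hA C (by simp [hC])).union_left (hB C hC)
  refine ⟨?_, List.pairwise_cons.2 ⟨hABd, hd⟩, ?_⟩
  · simp only [List.mem_cons]
    rintro C (rfl | hC)
    exacts [(hne A (by simp)).mono subset_union_left, hne C (by simp [hC])]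
  · simp only [List.mem_cons, iUnion_iUnion_eq_or_left, union_assoc]

theorem isPartList_iff {l : List (Set X)} :
    IsPartList X l ↔ 2 ≤ l.length ∧ IsPartListOf univ l := by
  constructor
  · rintro ⟨hlen, hnd, hne, hcov⟩
    refine ⟨hlen, hne, hnd.imp_of_mem fun hA hB hAB => disjoint_left.2 fun x hxA hxB => ?_, ?_⟩
    · exact hAB ((hcov x).unique ⟨hA, hxA⟩ ⟨hB, hxB⟩)
    · refine eq_univ_of_forall fun x => ?_
      obtain ⟨A, ⟨hA, hxA⟩, -⟩ := hcov x
      exact mem_biUnion hA hxA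
  · rintro ⟨hlen, hne, hd, hcov⟩
    refine ⟨hlen, hd.imp_of_mem fun hA _ hAB hAA => ?_, hne, fun x => ?_⟩
    · subst hAA
      exact (hne _ hA).ne_empty (disjoint_self.1 hAB)
    · obtain ⟨A, hA, hxA⟩ := mem_iUnion₂.1 (hcov ▸ mem_univ x)
      refine ⟨A, ⟨hA, hxA⟩, fun B ⟨hB, hxB⟩ => ?_⟩
      by_contra hBA
      exact disjoint_left.1 (hd.forall hB hA hBA) hxB hxA

theorem IsPartList.perm {l l' : List (Set X)} (h : IsPartList X l) (hp : l.Perm l') :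
    IsPartList X l' := by
  obtain ⟨hlen, hnd, hne, hcov⟩ := h
  refine ⟨hp.length_eq ▸ hlen, hp.nodup_iff.1 hnd, fun A hA => hne A (hp.mem_iff.2 hA),
    fun x => ?_⟩
  simpa only [hp.mem_iff] using hcov x

theorem IsPartList.merge {A B : Set X} {t : List (Set X)} (h : IsPartList X (A :: B :: t))
    (ht : t ≠ []) : IsPartList X ((A ∪ B) :: t) := by
  rw [isPartList_iff] at h ⊢
  refine ⟨?_, h.2.merge⟩
  have := List.length_pos_iff.2 ht
  simp only [List.length_cons]
  omega

theorem IsPartList.isPartListOf_compl_of_cons {A : Set X} {t : List (Set X)}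
    (h : IsPartList X (A :: t)) : IsPartListOf Aᶜ t := by
  obtain ⟨-, hne, hd, hcov⟩ := isPartList_iff.1 h
  obtain ⟨hA, hd⟩ := List.pairwise_cons.1 hd
  refine ⟨fun C hC => hne C (by simp [hC]), hd,
    eq_compl_iff_isCompl.2 (IsCompl.of_eq ?_ ?_).symm⟩
  · exact (disjoint_iUnion₂_right.2 hA).eq_bot
  · show A ∪ ⋃ C ∈ t, C = univ
    simpa only [List.mem_cons, iUnion_iUnion_eq_or_left] using hcov

theorem eqvGen_circStep_rotate (l : List (Set X)) (n : ℕ) :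
    EqvGen (CircStep X) l (l.rotate n) := by
  induction n with
  | zero => simpa using EqvGen.refl l
  | succ n ih =>
    refine ih.trans _ _ _ (EqvGen.rel _ _ (Or.inl ?_))
    rw [List.rotate_rotate]

theorem CircPart.mk_eq_of_isRotated {l l' : List (Set X)} (hl : l ~r l') (h : IsPartList X l)
    (h' : IsPartList X l') : CircPart.mk ⟨l, h⟩ = CircPart.mk ⟨l', h'⟩ := by
  obtain ⟨n, rfl⟩ := hl
  exact Quotient.sound (eqvGen_circStep_rotate l n)

theorem CircPart.exists_eq_mk_cons_of_mem_parts {σ : CircPart X} {A : Set X}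
    (hA : A ∈ σ.parts) : ∃ t, ∃ h : IsPartList X (A :: t), σ = CircPart.mk ⟨A :: t, h⟩ := by
  obtain ⟨⟨l, hl⟩, rfl, hA⟩ := hA
  obtain ⟨p, s, rfl⟩ := List.append_of_mem hA
  have hrot : p ++ A :: s ~r A :: (s ++ p) := List.isRotated_append
  exact ⟨s ++ p, hl.perm hrot.perm, mk_eq_of_isRotated hrot _ _⟩

theorem reflTransGen_mergeStep_mk_append {us vs : List (Set X)} {U : Set X}
    (hU : ⋃ A ∈ us, A = U) (h : IsPartList X (us ++ vs)) (h' : IsPartList X (U :: vs)) :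
    ReflTransGen MergeStep (CircPart.mk ⟨us ++ vs, h⟩) (CircPart.mk ⟨U :: vs, h'⟩) := by
  have hvs : vs ≠ [] := by
    rintro rfl
    simpa using h'.1
  cases us with
  | nil => simpa [← hU] using h'.2.2.1 U (by simp)
  | cons u t =>
    induction t generalizing u with
    | nil =>
      obtain rfl : u = U := by simpa using hU
      rfl
    | cons u' t ih =>
      have hm : IsPartList X ((u ∪ u') :: (t ++ vs)) := h.merge (by simp [hvs])
      refine ReflTransGen.head ⟨u, u', t ++ vs, h, hm, rfl, rfl⟩ (ih (u ∪ u') ?_ hm)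
      simpa only [List.mem_cons, iUnion_iUnion_eq_or_left, union_assoc] using hU

theorem compl_union_inter_eq {A B : Set X} (h : A ∪ B = univ) : Aᶜ ∪ A ∩ B = B := by
  rw [union_inter_distrib_left, compl_union_self, univ_inter, union_eq_right]
  exact compl_subset_iff_union.2 h

end PhyloCactus

open PhyloCactus

theorem compatible_proper_have_common_upper_bound_general
    (X : Type)
    (σ₁ σ₂ : CircPart X) (h₁ : ¬ σ₁.IsSplit) (h₂ : ¬ σ₂.IsSplit)
    (hc : σ₁.Compatible σ₂) :
    ∃ σ' : CircPart X, σ₁.Preceq σ' ∧ σ₂.Preceq σ' := by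
  obtain ⟨A, hA, B, hB, hAB⟩ := hc
  obtain ⟨as, hAas, rfl⟩ := CircPart.exists_eq_mk_cons_of_mem_parts hA
  obtain ⟨bs, hBbs, rfl⟩ := CircPart.exists_eq_mk_cons_of_mem_parts hB
  obtain ⟨mid, hmid⟩ := exists_isPartListOf (A ∩ B)
  have hB' : IsPartListOf B (as ++ mid) := by
    simpa only [compl_union_inter_eq hAB] using hAas.isPartListOf_compl_of_cons.append hmid
      (disjoint_compl_left.mono_right Set.inter_subset_left)
  have hA' : IsPartListOf A (mid ++ bs) := by
    have hBA : B ∪ A = Set.univ := by rw [Set.union_comm, hAB]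
    have := hmid.append hBbs.isPartListOf_compl_of_cons
      (disjoint_compl_right.mono_left Set.inter_subset_right)
    rwa [Set.union_comm, Set.inter_comm, compl_union_inter_eq hBA] at this
  have hL : IsPartList X (as ++ mid ++ bs) := by
    have hcov := hB'.append hBbs.isPartListOf_compl_of_cons disjoint_compl_right
    rw [Set.union_compl_self] at hcov
    refine isPartList_iff.2 ⟨?_, hcov⟩
    have hlenA := hAas.1
    have hlenB := hBbs.1
    simp only [List.length_append, List.length_cons] at hlenA hlenB ⊢
    omega
  have hrot : as ++ mid ++ bs ~r mid ++ bs ++ as := by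
    rw [List.append_assoc as]
    exact List.isRotated_append
  refine ⟨CircPart.mk ⟨as ++ mid ++ bs, hL⟩, Or.inr ⟨h₁, ?_⟩, Or.inr ⟨h₂, ?_⟩⟩
  · rw [CircPart.mk_eq_of_isRotated hrot hL (hL.perm hrot.perm)]
    exact reflTransGen_mergeStep_mk_append hA'.2.2 _ hAas
  · exact reflTransGen_mergeStep_mk_append hB'.2.2 hL hBbs

/-- If two proper circular partitions `σ₁`, `σ₂` of `X` are compatible, then there
exists a circular partition `σ'` of `X` with `σ₁ ≼ σ'` and `σ₂ ≼ σ'`. -/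
theorem compatible_proper_have_common_upper_bound
    (X : Type) [Fintype X] (hX : 2 ≤ Fintype.card X)
    (σ₁ σ₂ : CircPart X) (h₁ : ¬ σ₁.IsSplit) (h₂ : ¬ σ₂.IsSplit)
    (hc : σ₁.Compatible σ₂) :
    ∃ σ' : CircPart X, σ₁.Preceq σ' ∧ σ₂.Preceq σ' :=
  compatible_proper_have_common_upper_bound_general X σ₁ σ₂ h₁ h₂ hc
end
end

section
/- For every X-cactus N, the set C(N) of circular partitions induced by the blocks of N is a compatible set of circular partitions of X. -/
noncomputable section

open PhyloCactus

/-!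
A block of `N` is traversed by a walk (a cut edge or a cycle) whose vertices stay mutually
reachable after deleting any edges outside the block. Two blocks inducing different circular
partitions are edge-disjoint: two distinct cycles sharing an edge would share two vertices, and
a cycle is determined by its edge set up to rotation and reversal, hence so is its circular
partition. For edge-disjoint blocks `B`, `B'` some vertex `w` of `B` reaches all of `B'` in
`N - E(B)`, and some vertex `w'` of `B'` reaches all of `B` in `N - E(B')`. A walk from any
vertex `t` towards `w'` meets `B'` at some `y` without using `E(B')`; if that stretch avoids
`E(B)` as well, `t` lies in the component of `w` in `N - E(B)`, otherwise it first meets `B` at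
some `z`, and `t` lies in the component of `w'` in `N - E(B')`. So the two corresponding parts
cover `X`.
-/

namespace SimpleGraph

variable {V : Type*} {G : SimpleGraph V}

namespace Walk

theorem IsPath.eq_of_edges_subset {a b : V} {p q : G.Walk a b} (hp : p.IsPath) (hq : q.IsPath)
    (h : ∀ e ∈ q.edges, e ∈ p.edges) : q = p := by
  induction p with
  | nil => exact (isPath_iff_nil.1 hq).eq_nil
  | @cons a c b hac p ih =>
    cases q with
    | nil => simpa using isPath_iff_nil.1 hp
    | @cons _ c' _ hac' q =>
      obtain rfl : c' = c := by simpa using hp.eq_snd_of_mem_edges (w := c') (h _ (by simp))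
      rw [cons_isPath_iff] at hp hq
      refine congrArg _ (ih hp.1 hq.1 fun e he => ?_)
      rcases List.mem_cons.1 (h e (List.mem_cons_of_mem _ he)) with rfl | he'
      · exact absurd (q.fst_mem_support_of_mem_edges he) hq.2
      · exact he'

theorem IsCycle.eq_of_snd_eq {v : V} {c c' : G.Walk v v} (hc : c.IsCycle) (hc' : c'.IsCycle)
    (h : ∀ e ∈ c'.edges, e ∈ c.edges) (hsnd : c'.snd = c.snd) : c' = c := by
  cases c with
  | nil => exact absurd hc not_isCycle_nil
  | @cons _ a _ ha p =>
  cases c' with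
  | nil => exact absurd hc' not_isCycle_nil
  | @cons _ a' _ ha' p' =>
  obtain rfl : a' = a := by simpa using hsnd
  rw [cons_isCycle_iff] at hc hc'
  refine congrArg _ (hc.1.eq_of_edges_subset hc'.1 fun e he => ?_)
  rcases List.mem_cons.1 (h e (List.mem_cons_of_mem _ he)) with rfl | he'
  · exact absurd he hc'.2
  · exact he'

theorem IsCycle.eq_snd_or_eq_penultimate_of_mem_edges {v w : V} {c : G.Walk v v}
    (hc : c.IsCycle) (h : s(v, w) ∈ c.edges) : w = c.snd ∨ w = c.penultimate := by
  cases c with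
  | nil => exact absurd hc not_isCycle_nil
  | @cons _ a _ ha p =>
  rw [penultimate_cons_of_not_nil _ _ (not_nil_of_isCycle_cons hc)]
  rw [edges_cons, List.mem_cons] at h
  rcases h with h | h
  · exact Or.inl (by simpa using Sym2.congr_right.1 h)
  · exact Or.inr (((cons_isCycle_iff p ha).1 hc).1.eq_penultimate_of_mem_edges h)

theorem IsCycle.eq_or_eq_reverse_of_edges_subset {v : V} {c c' : G.Walk v v} (hc : c.IsCycle)
    (hc' : c'.IsCycle) (h : ∀ e ∈ c'.edges, e ∈ c.edges) : c' = c ∨ c' = c.reverse := by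
  rcases hc.eq_snd_or_eq_penultimate_of_mem_edges (h _ (mk_start_snd_mem_edges hc'.not_nil))
    with hsnd | hsnd
  · exact Or.inl (hc.eq_of_snd_eq hc' h hsnd)
  · refine Or.inr (hc.reverse.eq_of_snd_eq hc' (fun e he => ?_) (hsnd.trans (snd_reverse c).symm))
    simpa using h e he

theorem IsCycle.support_tail_isRotated_or_isRotated_reverse {u v : V} {c : G.Walk u u}
    {c' : G.Walk v v} (hc : c.IsCycle) (hc' : c'.IsCycle) (h : ∀ e ∈ c'.edges, e ∈ c.edges) :
    c'.support.tail ~r c.support.tail ∨ c'.support.tail ~r c.support.tail.reverse := by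
  classical
  have hv : v ∈ c.support :=
    c.fst_mem_support_of_mem_edges (h _ (mk_start_snd_mem_edges hc'.not_nil))
  have hrot := support_rotate c v hv
  rcases (hc.rotate hv).eq_or_eq_reverse_of_edges_subset hc'
    (fun e he => (rotate_edges c v hv).mem_iff.2 (h e he)) with rfl | rfl
  · exact Or.inl hrot
  · right
    rw [support_reverse, List.tail_reverse]
    exact ((List.IsRotated.dropLast_tail (support_ne_nil _) (by simp)).trans hrot).reverse

theorem reachable_deleteEdges_of_mem_support {s : Set (Sym2 V)} {a b u w : V} (p : G.Walk a b)
    (hp : ∀ e ∈ p.edges, e ∉ s) (hu : u ∈ p.support) (hw : w ∈ p.support) :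
    (G.deleteEdges s).Reachable u w := by
  classical
  let q := p.toDeleteEdges s hp
  have hq : q.support = p.support := support_transfer _ _
  exact (q.takeUntil u (hq ▸ hu)).reachable.symm.trans (q.takeUntil w (hq ▸ hw)).reachable

theorem reachable_deleteEdges_or_exists {s : Set (Sym2 V)} {S : Set V}
    (hs : ∀ ⦃x y⦄, s(x, y) ∈ s → x ∈ S) {a b : V} (p : G.Walk a b) :
    (G.deleteEdges s).Reachable a b ∨ ∃ z ∈ S, (G.deleteEdges s).Reachable a z := by
  induction p with
  | nil => exact Or.inl .rfl
  | @cons x y b hxy p ih =>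
    by_cases hxy' : s(x, y) ∈ s
    · exact Or.inr ⟨x, hs hxy', .rfl⟩
    · have hr : (G.deleteEdges s).Reachable x y := (deleteEdges_adj.2 ⟨hxy, hxy'⟩).reachable
      exact ih.imp hr.trans fun ⟨z, hz, hyz⟩ => ⟨z, hz, hr.trans hyz⟩

end Walk

theorem Reachable.exists_mem_support_reachable_deleteEdges {u v a b : V} (h : G.Reachable u v)
    (p : G.Walk a b) (hv : v ∈ p.support) :
    ∃ w ∈ p.support, (G.deleteEdges {e | e ∈ p.edges}).Reachable u w :=
  (h.some.reachable_deleteEdges_or_exists (S := {v | v ∈ p.support})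
    fun _ _ h => p.fst_mem_support_of_mem_edges h).elim (fun h => ⟨v, hv, h⟩) id

theorem Connected.exists_mem_support_forall_reachable_deleteEdges (hG : G.Connected)
    {a b a' b' : V} (p : G.Walk a b) (p' : G.Walk a' b') (hdisj : ∀ e ∈ p'.edges, e ∉ p.edges) :
    ∃ w ∈ p.support, ∀ u ∈ p'.support, (G.deleteEdges {e | e ∈ p.edges}).Reachable w u := by
  obtain ⟨w, hw, hw'⟩ :=
    (hG.preconnected a' a).exists_mem_support_reachable_deleteEdges p p.start_mem_support
  exact ⟨w, hw, fun u hu =>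
    hw'.symm.trans (p'.reachable_deleteEdges_of_mem_support hdisj p'.start_mem_support hu)⟩

theorem Connected.exists_forall_reachable_deleteEdges_or (hG : G.Connected) {a b a' b' : V}
    (p : G.Walk a b) (p' : G.Walk a' b') (hdisj : ∀ e ∈ p.edges, e ∉ p'.edges) :
    ∃ w ∈ p.support, ∃ w' ∈ p'.support, ∀ t : V,
      (G.deleteEdges {e | e ∈ p.edges}).Reachable w t ∨
        (G.deleteEdges {e | e ∈ p'.edges}).Reachable w' t := by
  obtain ⟨w, hw, hwp'⟩ := hG.exists_mem_support_forall_reachable_deleteEdges p p'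
    fun e he' he => hdisj e he he'
  obtain ⟨w', hw', hw'p⟩ := hG.exists_mem_support_forall_reachable_deleteEdges p' p hdisj
  refine ⟨w, hw, w', hw', fun t => ?_⟩
  obtain ⟨y, hy, hty⟩ :=
    (hG.preconnected t w').exists_mem_support_reachable_deleteEdges p' hw'
  rcases hty.some.reachable_deleteEdges_or_exists (s := {e | e ∈ p.edges})
    (S := {v | v ∈ p.support}) (fun _ _ h => p.fst_mem_support_of_mem_edges h)
    with h | ⟨z, hz, htz⟩
  · refine Or.inl ((hwp' y hy).trans (h.mono ?_).symm)
    rw [deleteEdges_deleteEdges]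
    exact deleteEdges_anti Set.subset_union_right
  · exact Or.inr ((hw'p z hz).trans (htz.mono (deleteEdges_le _)).symm)

end SimpleGraph

namespace PhyloCactus

variable {X : Type}

theorem eqvGen_circStep_of_isRotated {l l' : List (Set X)} (h : l ~r l') :
    Relation.EqvGen (CircStep X) l l' := by
  obtain ⟨n, rfl⟩ := h
  induction n with
  | zero => simpa using Relation.EqvGen.refl l
  | succ n ih => exact .trans _ _ _ ih (.rel _ _ (Or.inl (List.rotate_rotate ..).symm))

theorem CircPart.mem_parts_mk {l : PartList X} {A : Set X} (h : A ∈ l.1) :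
    A ∈ (CircPart.mk l).parts :=
  ⟨l, rfl, h⟩

theorem IsCactus.edgeSet_eq_of_mem_edges {V : Type} {G : SimpleGraph V} (hG : IsCactus G)
    {u v : V} {c : G.Walk u u} {c' : G.Walk v v} (hc : c.IsCycle) (hc' : c'.IsCycle)
    {e : Sym2 V} (he : e ∈ c.edges) (he' : e ∈ c'.edges) :
    {e | e ∈ c.edges} = {e | e ∈ c'.edges} := by
  by_contra hne
  induction e with
  | h x y =>
    exact (c.adj_of_mem_edges he).ne (hG c c' hc hc' hne
      ⟨c.fst_mem_support_of_mem_edges he, c'.fst_mem_support_of_mem_edges he'⟩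
      ⟨c.snd_mem_support_of_mem_edges he, c'.snd_mem_support_of_mem_edges he'⟩)

namespace XCactus

variable (N : XCactus X)

theorem adj_of_isBridge {u v : N.V} (hbr : N.G.IsBridge s(u, v)) : N.G.Adj u v :=
  hbr.reachable_iff_adj.1 (N.connected.preconnected u v)

theorem compatible_of_disjoint_walks {σ τ : CircPart X} {a b a' b' : N.V}
    (p : N.G.Walk a b) (p' : N.G.Walk a' b')
    (hσ : ∀ w ∈ p.support, N.compPart {e | e ∈ p.edges} w ∈ σ.parts)
    (hτ : ∀ w ∈ p'.support, N.compPart {e | e ∈ p'.edges} w ∈ τ.parts)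
    (hdisj : ∀ e ∈ p.edges, e ∉ p'.edges) : σ.Compatible τ := by
  obtain ⟨w, hw, w', hw', h⟩ := N.connected.exists_forall_reachable_deleteEdges_or p p' hdisj
  exact ⟨_, hσ w hw, _, hτ w' hw', Set.eq_univ_of_forall fun x => h (N.φ x)⟩

theorem compPart_mem_parts_of_isBridge {u v : N.V} (hbr : N.G.IsBridge s(u, v))
    {l : PartList X} (hl : l.1 = N.blockList {s(u, v)} [u, v]) :
    ∀ w ∈ (N.adj_of_isBridge hbr).toWalk.support,
      N.compPart {e | e ∈ (N.adj_of_isBridge hbr).toWalk.edges} w ∈ (CircPart.mk l).parts := by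
  intro w hw
  apply CircPart.mem_parts_mk
  rw [hl, blockList]
  obtain rfl | rfl : w = u ∨ w = v := by simpa using hw
  all_goals simp

theorem compPart_mem_parts_of_isCycle {v : N.V} {c : N.G.Walk v v} (hc : c.IsCycle)
    {l : PartList X} (hl : l.1 = N.blockList {e | e ∈ c.edges} c.support.tail) :
    ∀ w ∈ c.support, N.compPart {e | e ∈ c.edges} w ∈ (CircPart.mk l).parts := by
  intro w hw
  apply CircPart.mem_parts_mk
  rw [hl, blockList]
  refine List.mem_map_of_mem ?_
  rcases (SimpleGraph.Walk.mem_support_iff c).1 hw with rfl | h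
  · exact SimpleGraph.Walk.end_mem_tail_support hc.not_nil
  · exact h

theorem mk_eq_of_isBridge {u v u' v' : N.V} {l l' : PartList X}
    (hl : l.1 = N.blockList {s(u, v)} [u, v]) (hl' : l'.1 = N.blockList {s(u', v')} [u', v'])
    (h : s(u, v) = s(u', v')) : CircPart.mk l = CircPart.mk l' := by
  apply Quot.sound
  show Relation.EqvGen (CircStep X) l.1 l'.1
  rcases Sym2.eq_iff.1 h with ⟨rfl, rfl⟩ | ⟨rfl, rfl⟩
  · rw [hl, hl']
    exact .refl _
  · refine .rel _ _ (Or.inr ?_)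
    rw [hl, hl', Sym2.eq_swap]
    rfl

theorem mk_eq_of_isCycle {v v' : N.V} {c : N.G.Walk v v} {c' : N.G.Walk v' v'}
    (hc : c.IsCycle) (hc' : c'.IsCycle) {l l' : PartList X}
    (hl : l.1 = N.blockList {e | e ∈ c.edges} c.support.tail)
    (hl' : l'.1 = N.blockList {e | e ∈ c'.edges} c'.support.tail)
    (h : {e | e ∈ c.edges} = {e | e ∈ c'.edges}) : CircPart.mk l = CircPart.mk l' := by
  apply Quot.sound
  show Relation.EqvGen (CircStep X) l.1 l'.1
  rw [hl, hl', blockList, blockList, ← h]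
  rcases hc.support_tail_isRotated_or_isRotated_reverse hc' fun e he => (Set.ext_iff.1 h e).2 he
    with hr | hr
  · exact (eqvGen_circStep_of_isRotated (hr.map _)).symm
  · refine .trans _ _ _ (.rel _ _ (Or.inr rfl)) ?_
    rw [← List.map_reverse]
    exact (eqvGen_circStep_of_isRotated (hr.map _)).symm

end XCactus

end PhyloCactus

theorem circSet_compatible_general
    (X : Type) (N : XCactus X) :
    CompatibleFamily N.circSet := by
  rintro σ ⟨l, rfl, ⟨u, v, hbr, hl⟩ | ⟨x, c, hc, hl⟩⟩ τ
    ⟨l', rfl, ⟨u', v', hbr', hl'⟩ | ⟨x', c', hc', hl'⟩⟩ hne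
  · refine N.compatible_of_disjoint_walks _ _ (N.compPart_mem_parts_of_isBridge hbr hl)
      (N.compPart_mem_parts_of_isBridge hbr' hl') fun e he he' => hne ?_
    rw [SimpleGraph.Adj.edges_toWalk, List.mem_singleton] at he he'
    exact N.mk_eq_of_isBridge hl hl' (he.symm.trans he')
  · refine N.compatible_of_disjoint_walks _ c' (N.compPart_mem_parts_of_isBridge hbr hl)
      (N.compPart_mem_parts_of_isCycle hc' hl') fun e he he' => ?_
    rw [SimpleGraph.Adj.edges_toWalk, List.mem_singleton] at he
    exact hbr.notMem_edges_of_isCycle hc' (he ▸ he')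
  · refine N.compatible_of_disjoint_walks c _ (N.compPart_mem_parts_of_isCycle hc hl)
      (N.compPart_mem_parts_of_isBridge hbr' hl') fun e he he' => ?_
    rw [SimpleGraph.Adj.edges_toWalk, List.mem_singleton] at he'
    exact hbr'.notMem_edges_of_isCycle hc (he' ▸ he)
  · exact N.compatible_of_disjoint_walks c c' (N.compPart_mem_parts_of_isCycle hc hl)
      (N.compPart_mem_parts_of_isCycle hc' hl') fun e he he' =>
        hne (N.mk_eq_of_isCycle hc hc' hl hl' (N.cactus.edgeSet_eq_of_mem_edges hc hc' he he'))

/-- For every `X`-cactus `N`, the set `C(N)` of circular partitions induced by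
the blocks of `N` is a compatible set of circular partitions of `X`. -/
theorem circSet_compatible
    (X : Type) [Fintype X] (hX : 2 ≤ Fintype.card X) (N : XCactus X) :
    CompatibleFamily N.circSet :=
  circSet_compatible_general X N
end
end

section
/- Assume |X| ≥ 2. The relation ≤ defined on G(X) by N ≤ N' if and only if there is a (possibly empty) sequence of contractions transforming N' into N is a partial order on G(X), i.e. it is reflexive, antisymmetric and transitive. -/
noncomputable section

open PhyloCactus

private def gcard {X : Type} : GX X → ℕ :=
  Quotient.lift (fun N : XCactus X => @Fintype.card N.V N.fintypeV) (by
    rintro N N' ⟨f, -, -⟩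
    exact @Fintype.card_congr _ _ N.fintypeV N'.fintypeV f)

private lemma contraction_card_lt {X : Type} {N N' : XCactus X}
    (h : IsContraction N N') :
    @Fintype.card N'.V N'.fintypeV < @Fintype.card N.V N.fintypeV := by
  letI := N.fintypeV; letI := N'.fintypeV
  obtain (⟨u, v, f, hadj, -, hsurj, hfib, -, -⟩ |
      ⟨v₁, v₂, v₃, f, h12, -, -, hsurj, hfib, -, -⟩) := h
  · refine Fintype.card_lt_of_surjective_not_injective f hsurj fun hinj => ?_
    have : f u = f v := (hfib u v).2 (Or.inr ⟨by simp, by simp⟩)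
    exact hadj.ne (hinj this)
  · refine Fintype.card_lt_of_surjective_not_injective f hsurj fun hinj => ?_
    have : f v₁ = f v₂ := (hfib v₁ v₂).2 (Or.inr ⟨by simp, by simp⟩)
    exact h12.ne (hinj this)

private lemma gstep_lt {X : Type} {a b : GX X} (h : GStep a b) :
    gcard b < gcard a := by
  obtain ⟨N, N', ha, hb, hc⟩ := h
  subst ha; subst hb
  exact contraction_card_lt hc

private lemma gle_card_le {X : Type} {a b : GX X}
    (h : Relation.ReflTransGen GStep a b) : gcard b ≤ gcard a := by
  induction h with
  | refl => exact le_refl _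
  | @tail p q _ hstep ih => exact le_trans (le_of_lt (gstep_lt hstep)) ih

private lemma gle_card_lt {X : Type} {a b : GX X}
    (h : Relation.ReflTransGen GStep a b) (hne : a ≠ b) : gcard b < gcard a := by
  obtain (rfl | ⟨c, hac, hcb⟩) := h.cases_head
  · exact absurd rfl hne
  · exact lt_of_le_of_lt (gle_card_le hcb) (gstep_lt hac)

/-- The contraction relation `≤` on `G(X)`, the set of `X`-cactuses up to
isomorphism, is a partial order: reflexive, antisymmetric and transitive. -/
theorem GLe_partialOrder
    (X : Type) [Fintype X] (hX : 2 ≤ Fintype.card X) :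
    (∀ a : GX X, GLe a a) ∧
    (∀ a b : GX X, GLe a b → GLe b a → a = b) ∧
    (∀ a b c : GX X, GLe a b → GLe b c → GLe a c) := by
  refine ⟨fun a => Relation.ReflTransGen.refl, fun a b hab hba => ?_,
    fun a b c hab hbc => hbc.trans hab⟩
  by_contra hne
  exact absurd (gle_card_lt hab (Ne.symm hne)) (not_lt_of_gt (gle_card_lt hba hne))
end
end

section
/- Suppose that σ₁, σ₂ and σ₂' are three circular partitions of X such that σ₁ ≼ σ₂ and σ₂ is compatible with σ₂'. Then σ₁ is compatible with σ₂'. Moreover, if σ₁' is a circular partition of X with σ₁' ≼ σ₂', then σ₁ is compatible with σ₁'. -/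
noncomputable section

open PhyloCactus

lemma mem_of_circStep_eqv {X : Type} {l l' : List (Set X)}
    (h : Relation.EqvGen (CircStep X) l l') : ∀ A, A ∈ l ↔ A ∈ l' := by
  induction h with
  | rel a b h =>
    intro A
    rcases h with h | h <;> subst h <;> simp [List.mem_rotate]
  | refl a => intro A; rfl
  | symm a b _ ih => intro A; exact (ih A).symm
  | trans a b c _ _ ih1 ih2 => intro A; exact (ih1 A).trans (ih2 A)

lemma parts_mk {X : Type} (l : PartList X) :
    (CircPart.mk l).parts = {A | A ∈ l.1} := by
  ext A
  constructor
  · rintro ⟨l', hq, hmem⟩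
    have h : Relation.EqvGen (CircStep X) l.1 l'.1 := Quotient.exact hq
    exact (mem_of_circStep_eqv h A).mpr hmem
  · intro h; exact ⟨l, rfl, h⟩

lemma mergeStep_parts {X : Type} {σ σ' : CircPart X} (h : MergeStep σ σ') :
    ∀ A ∈ σ.parts, ∃ A' ∈ σ'.parts, A ⊆ A' := by
  obtain ⟨A, B, t, h1, h2, rfl, rfl⟩ := h
  intro P hP
  rw [parts_mk] at hP ⊢
  simp only [Set.mem_setOf_eq, List.mem_cons] at hP ⊢
  rcases hP with rfl | rfl | h
  · exact ⟨P ∪ B, Or.inl rfl, Set.subset_union_left⟩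
  · exact ⟨A ∪ P, Or.inl rfl, Set.subset_union_right⟩
  · exact ⟨P, Or.inr h, subset_rfl⟩

lemma preceq_parts {X : Type} {σ τ : CircPart X} (h : σ.Preceq τ) :
    ∀ A ∈ τ.parts, ∃ A' ∈ σ.parts, A ⊆ A' := by
  rcases h with rfl | ⟨-, h⟩
  · exact fun A hA => ⟨A, hA, subset_rfl⟩
  · induction h with
    | refl => exact fun A hA => ⟨A, hA, subset_rfl⟩
    | tail _ hstep ih =>
      intro A hA
      obtain ⟨A', hA', hsub⟩ := ih A hA
      obtain ⟨A'', h'', hsub'⟩ := mergeStep_parts hstep A' hA'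
      exact ⟨A'', h'', hsub.trans hsub'⟩

/-- If `σ₁ ≼ σ₂` and `σ₂` is compatible with `σ₂'`, then `σ₁` is compatible with
`σ₂'`; moreover for any `σ₁' ≼ σ₂'`, `σ₁` is compatible with `σ₁'`. -/
theorem compatible_of_preceq
    (X : Type) [Fintype X] (hX : 2 ≤ Fintype.card X)
    (σ₁ σ₂ σ₂' : CircPart X) (h12 : σ₁.Preceq σ₂) (hc : σ₂.Compatible σ₂') :
    σ₁.Compatible σ₂' ∧
    ∀ σ₁' : CircPart X, σ₁'.Preceq σ₂' → σ₁.Compatible σ₁' := by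
  obtain ⟨A, hA, B, hB, hAB⟩ := hc
  obtain ⟨A₁, hA₁, hsubA⟩ := preceq_parts h12 A hA
  have hA₁B : A₁ ∪ B = Set.univ :=
    Set.eq_univ_of_univ_subset (hAB ▸ Set.union_subset_union_left B hsubA)
  refine ⟨⟨A₁, hA₁, B, hB, hA₁B⟩, fun σ₁' h1' => ?_⟩
  obtain ⟨B₁, hB₁, hsubB⟩ := preceq_parts h1' B hB
  exact ⟨A₁, hA₁, B₁, hB₁,
    Set.eq_univ_of_univ_subset (hA₁B ▸ Set.union_subset_union_right A₁ hsubB)⟩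
end
end

section
/- Suppose that C₁ and C₂ are two nonempty sets of circular partitions of X and that C₂ is compatible. Then for each circular partition σ₁ ∈ C₁ there exists at most one circular partition σ₂ ∈ C₂ with σ₁ ≼ σ₂. Moreover, C₁ ⊴ C₂ holds if and only if there exists a unique domination map from C₁ to C₂. -/
noncomputable section

/-!
Every partition `τ` with `σ ≼ τ` refines the underlying partition of `σ`. If `τ ≠ τ'` both lie
above `σ` and are compatible, with parts `A ∪ B = X`, then the parts of `σ` containing `A` and `B`
already cover `X`, so `σ` has only two parts. But `σ` is proper, since it equals at most one of
`τ, τ'`.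
-/

namespace PhyloCactus

variable {X : Type}

theorem IsPartList.eq_of_mem_of_mem {l : List (Set X)} (hl : IsPartList X l) {A B : Set X}
    {x : X} (hA : A ∈ l) (hB : B ∈ l) (hxA : x ∈ A) (hxB : x ∈ B) : A = B :=
  (hl.2.2.2 x).unique ⟨hA, hxA⟩ ⟨hB, hxB⟩

theorem IsPartList.length_eq_two_of_union_eq_univ {l : List (Set X)} (hl : IsPartList X l)
    {P Q : Set X} (hP : P ∈ l) (hQ : Q ∈ l) (hPQ : P ∪ Q = Set.univ) : l.length = 2 := by
  classical
  have hsub : l.toFinset ⊆ {P, Q} := by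
    intro R hR
    rw [List.mem_toFinset] at hR
    obtain ⟨x, hxR⟩ := hl.2.2.1 R hR
    have hx : x ∈ P ∪ Q := hPQ ▸ Set.mem_univ x
    rcases hx with hxP | hxQ
    · simp [hl.eq_of_mem_of_mem hR hP hxR hxP]
    · simp [hl.eq_of_mem_of_mem hR hQ hxR hxQ]
  have hle : l.length ≤ 2 := calc
    l.length = l.toFinset.card := (List.toFinset_card_of_nodup hl.2.1).symm
    _ ≤ ({P, Q} : Finset (Set X)).card := Finset.card_le_card hsub
    _ ≤ 2 := Finset.card_le_two
  exact le_antisymm hle hl.1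

theorem CircStep.eqvGen_mem_iff {a b : List (Set X)} (h : Relation.EqvGen (CircStep X) a b)
    (A : Set X) : A ∈ a ↔ A ∈ b := by
  induction h with
  | rel _ _ hab => rcases hab with rfl | rfl <;> simp [List.mem_rotate]
  | refl => rfl
  | symm _ _ _ ih => exact ih.symm
  | trans _ _ _ _ _ ih₁ ih₂ => exact ih₁.trans ih₂

namespace CircPart

theorem exists_eq_mk (σ : CircPart X) : ∃ l : PartList X, σ = mk l :=
  (Quotient.exists_rep σ).imp fun _ h => h.symm

theorem mem_parts_mk_s11 {l : PartList X} {A : Set X} : A ∈ (mk l).parts ↔ A ∈ l.1 :=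
  ⟨fun ⟨_, heq, hA⟩ => (CircStep.eqvGen_mem_iff (Quotient.exact heq) A).mpr hA,
    fun hA => ⟨l, rfl, hA⟩⟩

def Refines (σ τ : CircPart X) : Prop := ∀ A ∈ σ.parts, ∃ B ∈ τ.parts, A ⊆ B

theorem Refines.refl (σ : CircPart X) : σ.Refines σ := fun A hA => ⟨A, hA, subset_rfl⟩

theorem Refines.trans {σ τ ρ : CircPart X} (h₁ : σ.Refines τ) (h₂ : τ.Refines ρ) :
    σ.Refines ρ := fun A hA =>
  let ⟨B, hB, hAB⟩ := h₁ A hA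
  let ⟨C, hC, hBC⟩ := h₂ B hB
  ⟨C, hC, hAB.trans hBC⟩

theorem isSplit_of_union_eq_univ {σ : CircPart X} {P Q : Set X} (hP : P ∈ σ.parts)
    (hQ : Q ∈ σ.parts) (hPQ : P ∪ Q = Set.univ) : σ.IsSplit := by
  obtain ⟨l, rfl⟩ := σ.exists_eq_mk
  exact ⟨l, rfl, l.2.length_eq_two_of_union_eq_univ (mem_parts_mk_s11.mp hP) (mem_parts_mk_s11.mp hQ) hPQ⟩

theorem isSplit_of_refines_of_compatible {σ τ τ' : CircPart X} (hτ : τ.Refines σ)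
    (hτ' : τ'.Refines σ) (hc : τ.Compatible τ') : σ.IsSplit := by
  obtain ⟨A, hA, B, hB, hAB⟩ := hc
  obtain ⟨P, hP, hAP⟩ := hτ A hA
  obtain ⟨Q, hQ, hBQ⟩ := hτ' B hB
  exact isSplit_of_union_eq_univ hP hQ
    (Set.univ_subset_iff.mp (hAB ▸ Set.union_subset_union hAP hBQ))

end CircPart

theorem MergeStep.refines {σ σ' : CircPart X} (h : MergeStep σ σ') : σ.Refines σ' := by
  obtain ⟨A, B, t, -, -, rfl, rfl⟩ := h
  intro C hC
  simp only [CircPart.mem_parts_mk_s11, List.mem_cons] at hC ⊢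
  rcases hC with rfl | rfl | hC
  · exact ⟨C ∪ B, Or.inl rfl, Set.subset_union_left⟩
  · exact ⟨A ∪ C, Or.inl rfl, Set.subset_union_right⟩
  · exact ⟨C, Or.inr hC, subset_rfl⟩

namespace CircPart

theorem Preceq.refines {σ τ : CircPart X} (h : σ.Preceq τ) : τ.Refines σ := by
  rcases h with rfl | ⟨-, h⟩
  · exact Refines.refl σ
  · induction h with
    | refl => exact Refines.refl τ
    | tail _ hstep ih => exact ih.trans hstep.refines

theorem eq_of_preceq_of_compatible {σ τ τ' : CircPart X} (h : σ.Preceq τ) (h' : σ.Preceq τ')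
    (hc : τ.Compatible τ') : τ = τ' := by
  by_contra hne
  have hproper : ¬ σ.IsSplit := by
    rcases h with rfl | ⟨hproper, -⟩
    · exact (h'.resolve_left hne).1
    · exact hproper
  exact hproper (isSplit_of_refines_of_compatible h.refines h'.refines hc)

end CircPart

theorem CompatibleFamily.eq_of_preceq {C : Set (CircPart X)} (hC : CompatibleFamily C)
    {σ τ τ' : CircPart X} (hτ : τ ∈ C) (hτ' : τ' ∈ C) (h : σ.Preceq τ) (h' : σ.Preceq τ') :
    τ = τ' := by
  by_contra hne
  exact hne (CircPart.eq_of_preceq_of_compatible h h' (hC τ hτ τ' hτ' hne))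

theorem IsDominationMap.eqOn {C C' : Set (CircPart X)} (hC' : CompatibleFamily C')
    {L L' : CircPart X → CircPart X} (hL : IsDominationMap C C' L)
    (hL' : IsDominationMap C C' L') : Set.EqOn L L' C := fun _ hσ =>
  hC'.eq_of_preceq (hL.1 hσ) (hL'.1 hσ) (hL.2.2 _ hσ) (hL'.2.2 _ hσ)

end PhyloCactus

open PhyloCactus

theorem domination_map_unique_general
    (X : Type)
    (C₁ C₂ : Set (CircPart X))
    (hc : CompatibleFamily C₂) :
    (∀ σ₁ ∈ C₁, ∀ σ₂ ∈ C₂, ∀ σ₂' ∈ C₂,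
      σ₁.Preceq σ₂ → σ₁.Preceq σ₂' → σ₂ = σ₂') ∧
    (Dominates C₁ C₂ ↔
      ∃ L, IsDominationMap C₁ C₂ L ∧
        ∀ L', IsDominationMap C₁ C₂ L' → Set.EqOn L' L C₁) :=
  ⟨fun _ _ _ hσ₂ _ hσ₂' => hc.eq_of_preceq hσ₂ hσ₂',
    ⟨fun ⟨L, hL⟩ => ⟨L, hL, fun _ hL' => hL'.eqOn hc hL⟩, fun ⟨L, hL, _⟩ => ⟨L, hL⟩⟩⟩

/-- If `C₂` is a nonempty compatible set of circular partitions, then each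
`σ₁ ∈ C₁` lies below at most one member of `C₂`, and `C₁ ⊴ C₂` holds iff there
is a unique domination map from `C₁` to `C₂`. -/
theorem domination_map_unique
    (X : Type) [Fintype X] (hX : 2 ≤ Fintype.card X)
    (C₁ C₂ : Set (CircPart X)) (h₁ : C₁.Nonempty) (h₂ : C₂.Nonempty)
    (hc : CompatibleFamily C₂) :
    (∀ σ₁ ∈ C₁, ∀ σ₂ ∈ C₂, ∀ σ₂' ∈ C₂,
      σ₁.Preceq σ₂ → σ₁.Preceq σ₂' → σ₂ = σ₂') ∧
    (Dominates C₁ C₂ ↔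
      ∃ L, IsDominationMap C₁ C₂ L ∧
        ∀ L', IsDominationMap C₁ C₂ L' → Set.EqOn L' L C₁) :=
  domination_map_unique_general X C₁ C₂ hc
end
end
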